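/- Let r : 𝔤* → 𝔤 be a skew-symmetric solution of the classical Yang–Baxter equation. Then the image Im(r) is a Lie subalgebra of 𝔤, and for every α ∈ 𝔤* the trace of the right multiplication R_α : 𝔤* → 𝔤*, R_α(β) := ad*_{r(β)}α, equals the trace of the linear endomorphism S_α of Im(r) determined by S_α(r(β)) := r(ad*_{r(β)}α) for all β ∈ 𝔤*. -/

import Mathlib

/-
Skew-symmetry turns `γ (r (ad*_{r α} β))` into `β ⁅r α, r γ⁆`, so pairing
`r (ad*_{r α} β - ad*_{r β} α)` with any `γ` gives `β ⁅r α, r γ⁆ - α ⁅r β, r γ⁆`, which the CYBE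
identifies with `γ ⁅r α, r β⁆`; hence `⁅r α, r β⁆ = r (ad*_{r α} β - ad*_{r β} α)` lies in `Im r`.
For the traces, `R_α` kills `ker r` and `r ∘ R_α = S_α ∘ r`, so `R_α = g ∘ r` for some `g`,
`S_α = r ∘ g`, and `tr (g ∘ r) = tr (r ∘ g)`.
-/

/-- The coadjoint action of `x : L` on the dual: `⟨coad x α, y⟩ = -⟨α, [x,y]⟩`. -/
noncomputable def coad {L : Type*} [LieRing L] [LieAlgebra ℝ L]
    (x : L) (α : Module.Dual ℝ L) : Module.Dual ℝ L :=
  -(α ∘ₗ (LieAlgebra.ad ℝ L x))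

/-- `[r,r](α,β,γ) := ⟨γ,[r α, r β]⟩ + ⟨α,[r β, r γ]⟩ + ⟨β,[r γ, r α]⟩`. -/
def cybe {L : Type*} [LieRing L] [LieAlgebra ℝ L]
    (r : Module.Dual ℝ L →ₗ[ℝ] L) (α β γ : Module.Dual ℝ L) : ℝ :=
  γ ⁅r α, r β⁆ + α ⁅r β, r γ⁆ + β ⁅r γ, r α⁆

namespace LinearMap

variable {K M N : Type*} [CommRing K] [AddCommGroup M] [Module K M] [AddCommGroup N] [Module K N]
  [Module.Free K M] [Module.Finite K M] [Module.Free K N] [Module.Finite K N]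

theorem trace_eq_of_surjective_of_comp_eq_comp {f : M →ₗ[K] N} (hf : Function.Surjective f)
    {R : M →ₗ[K] M} {S : N →ₗ[K] N} (hker : ker f ≤ ker R) (hRS : f ∘ₗ R = S ∘ₗ f) :
    trace K M R = trace K N S := by
  obtain ⟨q, hq⟩ := f.exists_rightInverse_of_surjective (range_eq_top.mpr hf)
  have hq_apply (n : N) : f (q n) = n := congr($hq n)
  have hR : R = (R ∘ₗ q) ∘ₗ f := by
    ext m
    have : m - q (f m) ∈ ker R := hker <| by simp [hq_apply]
    simpa [sub_eq_zero] using this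
  have hS : f ∘ₗ (R ∘ₗ q) = S := by
    rw [← comp_assoc, hRS, comp_assoc, hq, comp_id]
  rw [hR, trace_comp_comm', hS]

end LinearMap

section CoadjointAction

variable {L : Type*} [LieRing L] [LieAlgebra ℝ L]

theorem coad_apply (x : L) (α : Module.Dual ℝ L) (y : L) : coad x α y = -α ⁅x, y⁆ := rfl

@[simp]
theorem coad_zero (α : Module.Dual ℝ L) : coad 0 α = 0 := by
  ext y
  simp [coad_apply]

theorem map_coad_sub_coad_eq_lie {r : Module.Dual ℝ L →ₗ[ℝ] L}
    (hskew : ∀ α β : Module.Dual ℝ L, α (r β) = -β (r α))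
    (hcybe : ∀ α β γ : Module.Dual ℝ L, cybe r α β γ = 0) (α β : Module.Dual ℝ L) :
    r (coad (r α) β - coad (r β) α) = ⁅r α, r β⁆ := by
  rw [← sub_eq_zero, ← Module.forall_dual_apply_eq_zero_iff ℝ]
  intro γ
  have hα : γ (r (coad (r α) β)) = β ⁅r α, r γ⁆ := by rw [hskew, coad_apply, neg_neg]
  have hβ : γ (r (coad (r β) α)) = α ⁅r β, r γ⁆ := by rw [hskew, coad_apply, neg_neg]
  have hγ : β ⁅r γ, r α⁆ = -β ⁅r α, r γ⁆ := by rw [← lie_skew, map_neg]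
  have hc := hcybe α β γ
  rw [cybe, hγ] at hc
  simp only [map_sub, hα, hβ]
  linarith

end CoadjointAction

/-- for a skew-symmetric solution `r` of the CYBE, `Im r` is a Lie
subalgebra of `𝔤`, and for every `α ∈ 𝔤*` the trace of the right multiplication
`R_α : β ↦ ad*_{r β} α` on `𝔤*` equals the trace of the endomorphism `S_α` of `Im r`
determined by `S_α (r β) = r (ad*_{r β} α)`. -/
theorem stmt4 {L : Type*} [LieRing L] [LieAlgebra ℝ L] [FiniteDimensional ℝ L]
    (r : Module.Dual ℝ L →ₗ[ℝ] L)
    (hskew : ∀ α β : Module.Dual ℝ L, α (r β) = - β (r α))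
    (hcybe : ∀ α β γ : Module.Dual ℝ L, cybe r α β γ = 0) :
    (∀ x ∈ LinearMap.range r, ∀ y ∈ LinearMap.range r, ⁅x, y⁆ ∈ LinearMap.range r) ∧
    (∀ (α : Module.Dual ℝ L)
      (R : Module.Dual ℝ L →ₗ[ℝ] Module.Dual ℝ L)
      (S : LinearMap.range r →ₗ[ℝ] LinearMap.range r),
      (∀ β : Module.Dual ℝ L, R β = coad (r β) α) →
      (∀ β : Module.Dual ℝ L,
        (S ⟨r β, LinearMap.mem_range_self r β⟩ : L) = r (coad (r β) α)) →
      LinearMap.trace ℝ (Module.Dual ℝ L) R = LinearMap.trace ℝ (LinearMap.range r) S) := by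
  refine ⟨?_, fun α R S hR hS => ?_⟩
  · rintro _ ⟨a, rfl⟩ _ ⟨b, rfl⟩
    exact ⟨_, map_coad_sub_coad_eq_lie hskew hcybe a b⟩
  · refine LinearMap.trace_eq_of_surjective_of_comp_eq_comp r.surjective_rangeRestrict ?_ ?_
    · intro β hβ
      rw [LinearMap.ker_rangeRestrict, LinearMap.mem_ker] at hβ
      rw [LinearMap.mem_ker, hR, hβ, coad_zero]
    · ext β : 1
      exact Subtype.ext ((congrArg r (hR β)).trans (hS β).symm)
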